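/- (Linear transformations by nonnegative matrices.) Let Z = (Z_1,…,Z_D) be a standard MGP random vector, Z_j = E + S_j. Let σ ∈ (0,∞)^D, let ξ ∈ ℝ be a common shape parameter, and define Y_j = σ_j(exp(ξ Z_j) − 1)/ξ (interpreted as σ_j Z_j when ξ = 0). Let A = (a_{ij}) be an m × D matrix with nonnegative entries such that (Aσ)_i = Σ_j a_{ij} σ_j > 0 for every i = 1,…,m. Put W_i = Σ_j a_{ij} Y_j. Then the event A* = {∃ i : W_i > 0} has positive probability; on A* the quantities Z'_i = ξ^{-1} log(1 + ξ W_i/(Aσ)_i) (= W_i/(Aσ)_i when ξ = 0) are well defined, Z'_i = E + ρ_i with ρ_i = ξ^{-1} log( Σ_j a_{ij} σ_j exp(ξ S_j) / (Aσ)_i ) ≤ 0 independent of E, and conditionally on A* the random variable M' = max_i Z'_i is unit-exponential and independent of the vector (Z'_1 − M', …, Z'_m − M'). In other words, the conditional distribution of A·Y given A·Y ≰ 0 is multivariate generalized Pareto with scale vector A·σ and common shape ξ. -/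

import Mathlib

open MeasureTheory ProbabilityTheory

/-- The marginal transformation `z ↦ σ (exp (ξ z) − 1)/ξ`, interpreted as `σ z` when
`ξ = 0`. -/
noncomputable def gpScale (σ ξ z : ℝ) : ℝ :=
  if ξ = 0 then σ * z else σ * (Real.exp (ξ * z) - 1) / ξ

/-!
The marginal map `h = gpScale 1 ξ` is strictly increasing with `h 0 = 0`, and a weighted
average of the values `h (e + sⱼ)` equals `h (e + ρ)`, where `ρ` is the `exp (ξ ·)`-mean of `s`.
Hence `Z'ᵢ = E + ρᵢ(S)`, `ρᵢ(S) ≤ 0`, and `A* = {M' > 0}` with `M' = E + maxᵢ ρᵢ(S)`.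
For `E` unit-exponential and independent of `X`, and `R = r X ≤ 0`, memorylessness gives
`P(E + R > t, X ∈ B) = e⁻ᵗ P(E + R > 0, X ∈ B)` for `t ≥ 0`; so given `E + R > 0`, the excess
`E + R` is unit-exponential and independent of `X`, and `Z' − M'` is a function of `S`.
-/

lemma gpScale_eq_mul (σ ξ z : ℝ) : gpScale σ ξ z = σ * gpScale 1 ξ z := by
  unfold gpScale
  split_ifs <;> ring

@[simp]
lemma gpScale_zero (σ ξ : ℝ) : gpScale σ ξ 0 = 0 := by
  simp [gpScale]

lemma strictMono_gpScale_one (ξ : ℝ) : StrictMono (gpScale 1 ξ) := by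
  intro a b hab
  unfold gpScale
  split_ifs with hξ
  · linarith
  rcases lt_or_gt_of_ne hξ with hξ | hξ
  · rw [div_lt_div_right_of_neg hξ]
    gcongr 1 * (Real.exp ?_ - 1)
    exact mul_lt_mul_of_neg_left hab hξ
  · exact div_lt_div_of_pos_right (by gcongr) hξ

lemma gpScale_one_pos_iff {ξ z : ℝ} : 0 < gpScale 1 ξ z ↔ 0 < z := by
  simpa using (strictMono_gpScale_one ξ).lt_iff_lt (a := 0)

lemma gpScale_one_nonpos_iff {ξ z : ℝ} : gpScale 1 ξ z ≤ 0 ↔ z ≤ 0 := by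
  simpa using (strictMono_gpScale_one ξ).le_iff_le (b := 0)

noncomputable def gpScaleInv (ξ y : ℝ) : ℝ :=
  if ξ = 0 then y else Real.log (1 + ξ * y) / ξ

lemma gpScaleInv_gpScale_one (ξ z : ℝ) : gpScaleInv ξ (gpScale 1 ξ z) = z := by
  unfold gpScaleInv gpScale
  split_ifs with hξ
  · ring
  · rw [show 1 + ξ * (1 * (Real.exp (ξ * z) - 1) / ξ) = Real.exp (ξ * z) by field_simp; ring,
      Real.log_exp, mul_div_cancel_left₀ z hξ]

section GPMean

variable {ι : Type*} [Fintype ι]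

/-- The paper's `ρ`: the `w`-weighted quasi-arithmetic mean of `s` generated by `exp (ξ ·)`
(the arithmetic mean when `ξ = 0`). -/
noncomputable def gpMean (ξ : ℝ) (w s : ι → ℝ) : ℝ :=
  if ξ = 0 then (∑ j, w j * s j) / ∑ j, w j
  else Real.log ((∑ j, w j * Real.exp (ξ * s j)) / ∑ j, w j) / ξ

lemma measurable_gpMean (ξ : ℝ) (w : ι → ℝ) : Measurable (gpMean ξ w) := by
  unfold gpMean
  by_cases hξ : ξ = 0 <;> simp only [hξ, ↓reduceIte] <;> fun_prop

lemma sum_mul_exp_pos {w : ι → ℝ} (hw : ∀ j, 0 ≤ w j) (hw₀ : 0 < ∑ j, w j) (f : ι → ℝ) :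
    0 < ∑ j, w j * Real.exp (f j) := by
  obtain ⟨j, -, hj⟩ :=
    Finset.exists_lt_of_sum_lt (by simpa using hw₀ : ∑ j : ι, (0 : ℝ) < ∑ j, w j)
  exact Finset.sum_pos' (fun j _ => mul_nonneg (hw j) (Real.exp_nonneg _))
    ⟨j, Finset.mem_univ j, mul_pos hj (Real.exp_pos _)⟩

lemma sum_mul_gpScale_add_div {w : ι → ℝ} (hw : ∀ j, 0 ≤ w j) (hw₀ : 0 < ∑ j, w j)
    (ξ e : ℝ) (s : ι → ℝ) :
    (∑ j, w j * gpScale 1 ξ (e + s j)) / ∑ j, w j = gpScale 1 ξ (e + gpMean ξ w s) := by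
  unfold gpMean gpScale
  split_ifs with hξ
  · simp only [one_mul, mul_add, Finset.sum_add_distrib, ← Finset.sum_mul]
    field_simp
  · have hK := sum_mul_exp_pos hw hw₀ (fun j => ξ * s j)
    have hsum : ∑ j, w j * (1 * (Real.exp (ξ * (e + s j)) - 1) / ξ)
        = (Real.exp (ξ * e) * ∑ j, w j * Real.exp (ξ * s j) - ∑ j, w j) / ξ := by
      simp only [mul_add, Real.exp_add, Finset.mul_sum, ← Finset.sum_sub_distrib, Finset.sum_div]
      exact Finset.sum_congr rfl fun j _ => by ring
    rw [hsum, mul_add, mul_div_cancel₀ _ hξ, Real.exp_add, Real.exp_log (div_pos hK hw₀)]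
    field_simp

lemma gpMean_nonpos {w : ι → ℝ} (hw : ∀ j, 0 ≤ w j) (hw₀ : 0 < ∑ j, w j) (ξ : ℝ)
    {s : ι → ℝ} (hs : ∀ j, s j ≤ 0) : gpMean ξ w s ≤ 0 := by
  have h := sum_mul_gpScale_add_div hw hw₀ ξ 0 s
  simp only [zero_add] at h
  rw [← gpScale_one_nonpos_iff, ← h]
  exact div_nonpos_of_nonpos_of_nonneg (Finset.sum_nonpos fun j _ =>
    mul_nonpos_of_nonneg_of_nonpos (hw j) (gpScale_one_nonpos_iff.mpr (hs j))) hw₀.le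

end GPMean

section Exceedance

variable {Ω α : Type*} [MeasurableSpace Ω] [MeasurableSpace α] {μ : Measure Ω}

lemma indepFun_of_measure_Ioi_inter_preimage [IsZeroOrProbabilityMeasure μ] {M : Ω → ℝ}
    {X : Ω → α} (hM : Measurable M) (hX : Measurable X)
    (h : ∀ t B, MeasurableSet B →
      μ (M ⁻¹' Set.Ioi t ∩ X ⁻¹' B) = μ (M ⁻¹' Set.Ioi t) * μ (X ⁻¹' B)) :
    IndepFun M X μ := by
  rw [IndepFun_iff_Indep]
  refine IndepSets.indep hM.comap_le hX.comap_le (isPiSystem_Ioi.comap M)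
    (MeasurableSpace.isPiSystem_measurableSet.comap X) ?_ ?_ ?_
  · rw [BorelSpace.measurable_eq (α := ℝ), borel_eq_generateFrom_Ioi,
      MeasurableSpace.comap_generateFrom]
    rfl
  · have hgen := MeasurableSpace.comap_generateFrom (f := X) (s := {B : Set α | MeasurableSet B})
    rwa [MeasurableSpace.generateFrom_measurableSet] at hgen
  · rw [IndepSets_iff]
    rintro _ _ ⟨_, ⟨t, rfl⟩, rfl⟩ ⟨B, hB, rfl⟩
    exact h t B hB

variable [IsProbabilityMeasure μ] {E M : Ω → ℝ} {X : Ω → α} {r : α → ℝ}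

lemma measure_lt_add_inter_preimage (hE : Measurable E) (hX : Measurable X) (hr : Measurable r)
    (hEexp : ∀ t : ℝ, 0 ≤ t → μ {ω | t < E ω} = ENNReal.ofReal (Real.exp (-t)))
    (hind : IndepFun E X μ) (hr0 : ∀ᵐ ω ∂μ, r (X ω) ≤ 0) {t : ℝ} (ht : 0 ≤ t)
    {B : Set α} (hB : MeasurableSet B) :
    μ ({ω | t < E ω + r (X ω)} ∩ X ⁻¹' B)
      = ENNReal.ofReal (Real.exp (-t))
        * ∫⁻ x in B, ENNReal.ofReal (Real.exp (r x)) ∂μ.map X := by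
  set C : Set (α × ℝ) := {p | p.1 ∈ B ∧ t - r p.1 < p.2}
  have hC : MeasurableSet C := (hB.preimage measurable_fst).inter
    (measurableSet_lt (measurable_const.sub (hr.comp measurable_fst)) measurable_snd)
  have hlaw : μ.map (fun ω => (X ω, E ω)) = (μ.map X).prod (μ.map E) :=
    (indepFun_iff_map_prod_eq_prod_map_map hX.aemeasurable hE.aemeasurable).mp hind.symm
  have hsection : ∀ x, μ.map E (Prod.mk x ⁻¹' C)
      = B.indicator (fun x => μ.map E (Set.Ioi (t - r x))) x := by
    intro x
    by_cases hx : x ∈ B <;> simp [C, hx, Set.Ioi_def]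
  have htail : ∀ᵐ x ∂(μ.map X).restrict B, μ.map E (Set.Ioi (t - r x))
      = ENNReal.ofReal (Real.exp (-t)) * ENNReal.ofReal (Real.exp (r x)) := by
    have hr0' : ∀ᵐ x ∂μ.map X, r x ≤ 0 :=
      (ae_map_iff hX.aemeasurable (measurableSet_le hr measurable_const)).mpr hr0
    filter_upwards [ae_restrict_of_ae hr0'] with x hx
    rw [Measure.map_apply hE measurableSet_Ioi, ← ENNReal.ofReal_mul (Real.exp_nonneg _),
      ← Real.exp_add, show -t + r x = -(t - r x) by ring]
    exact hEexp (t - r x) (by linarith)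
  calc μ ({ω | t < E ω + r (X ω)} ∩ X ⁻¹' B) = μ.map (fun ω => (X ω, E ω)) C := by
        rw [Measure.map_apply (hX.prodMk hE) hC]
        congr 1
        ext ω
        simp [C, and_comm, sub_lt_iff_lt_add]
    _ = ∫⁻ x, μ.map E (Prod.mk x ⁻¹' C) ∂μ.map X := by rw [hlaw, Measure.prod_apply hC]
    _ = ∫⁻ x in B, μ.map E (Set.Ioi (t - r x)) ∂μ.map X := by
        simp_rw [hsection]
        exact lintegral_indicator hB _
    _ = _ := by rw [lintegral_congr_ae htail, lintegral_const_mul' _ _ ENNReal.ofReal_ne_top]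

theorem exp_add_nonpos_cond_pos (hE : Measurable E) (hX : Measurable X) (hr : Measurable r)
    (hEexp : ∀ t : ℝ, 0 ≤ t → μ {ω | t < E ω} = ENNReal.ofReal (Real.exp (-t)))
    (hind : IndepFun E X μ) (hr0 : ∀ᵐ ω ∂μ, r (X ω) ≤ 0)
    (hM : ∀ ω, M ω = E ω + r (X ω)) :
    0 < μ {ω | 0 < M ω}
    ∧ (∀ t : ℝ, 0 ≤ t →
        μ[{ω | t < M ω} | {ω | 0 < M ω}] = ENNReal.ofReal (Real.exp (-t)))
    ∧ IndepFun M X μ[|{ω | 0 < M ω}] := by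
  obtain rfl : M = fun ω => E ω + r (X ω) := funext hM
  set A := {ω | 0 < E ω + r (X ω)}
  have hMmeas : Measurable fun ω => E ω + r (X ω) := hE.add (hr.comp hX)
  have hA : MeasurableSet A := measurableSet_lt measurable_const hMmeas
  have hpos : 0 < μ A := by
    have h := measure_lt_add_inter_preimage hE hX hr hEexp hind hr0 le_rfl MeasurableSet.univ
    simp only [Set.preimage_univ, Set.inter_univ, neg_zero, Real.exp_zero, ENNReal.ofReal_one,
      one_mul, Measure.restrict_univ] at h
    have : IsProbabilityMeasure (μ.map X) := Measure.isProbabilityMeasure_map hX.aemeasurable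
    rw [h, lintegral_pos_iff_support (by fun_prop)]
    simp [Function.support, Real.exp_pos]
  have hcond : ∀ t : ℝ, 0 ≤ t → ∀ B, MeasurableSet B →
      μ[{ω | t < E ω + r (X ω)} ∩ X ⁻¹' B | A]
        = ENNReal.ofReal (Real.exp (-t)) * μ[X ⁻¹' B | A] := by
    intro t ht B hB
    have hsub : {ω | t < E ω + r (X ω)} ⊆ A := fun ω hω => ht.trans_lt hω
    have hA_inter := measure_lt_add_inter_preimage hE hX hr hEexp hind hr0 le_rfl hB
    rw [neg_zero, Real.exp_zero, ENNReal.ofReal_one, one_mul] at hA_inter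
    rw [cond_apply hA, cond_apply hA, ← Set.inter_assoc, Set.inter_eq_right.mpr hsub,
      measure_lt_add_inter_preimage hE hX hr hEexp hind hr0 ht hB, hA_inter, mul_left_comm]
  have : IsProbabilityMeasure μ[|A] := cond_isProbabilityMeasure hpos.ne'
  have htail : ∀ t : ℝ, 0 ≤ t →
      μ[{ω | t < E ω + r (X ω)} | A] = ENNReal.ofReal (Real.exp (-t)) := by
    intro t ht
    simpa using hcond t ht Set.univ MeasurableSet.univ
  refine ⟨hpos, htail, indepFun_of_measure_Ioi_inter_preimage hMmeas hX fun t B hB => ?_⟩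
  rcases le_or_gt 0 t with ht | ht
  · exact (hcond t ht B hB).trans (by rw [← htail t ht]; rfl)
  · have hsub : A ⊆ (fun ω => E ω + r (X ω)) ⁻¹' Set.Ioi t := fun ω hω => ht.trans hω
    rw [cond_apply hA, cond_apply hA, cond_apply hA, ← Set.inter_assoc,
      Set.inter_eq_left.mpr hsub, ENNReal.inv_mul_cancel hpos.ne' (measure_ne_top _ _), one_mul]

end Exceedance

theorem stmt_9_general
    {Ω : Type*} [MeasureSpace Ω] [IsProbabilityMeasure (ℙ : Measure Ω)]
    {D m : ℕ} (hm : 0 < m)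
    (E : Ω → ℝ) (S : Ω → Fin D → ℝ)
    (hEmeas : Measurable E) (hSmeas : Measurable S)
    (hEexp : ∀ t : ℝ, 0 ≤ t → ℙ {ω | t < E ω} = ENNReal.ofReal (Real.exp (-t)))
    (hindep : IndepFun E S ℙ)
    (hSle : ∀ j, ∀ᵐ ω ∂ℙ, S ω j ≤ 0)
    (σ : Fin D → ℝ) (hσ : ∀ j, 0 < σ j) (ξ : ℝ)
    (Y : Ω → Fin D → ℝ) (hY : ∀ ω j, Y ω j = gpScale (σ j) ξ (E ω + S ω j))
    (A : Fin m → Fin D → ℝ) (hA : ∀ i j, 0 ≤ A i j)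
    (hAσ : ∀ i, 0 < ∑ j, A i j * σ j)
    (W : Ω → Fin m → ℝ) (hW : ∀ ω i, W ω i = ∑ j, A i j * Y ω j)
    (Astar : Set Ω) (hAstar : Astar = {ω | ∃ i, 0 < W ω i})
    (Z' : Ω → Fin m → ℝ)
    (hZ' : ∀ ω i, Z' ω i =
      if ξ = 0 then W ω i / ∑ j, A i j * σ j
      else Real.log (1 + ξ * W ω i / ∑ j, A i j * σ j) / ξ)
    (ρ : Ω → Fin m → ℝ)
    (hρ : ∀ ω i, ρ ω i =
      if ξ = 0 then (∑ j, A i j * σ j * S ω j) / ∑ j, A i j * σ j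
      else Real.log ((∑ j, A i j * σ j * Real.exp (ξ * S ω j)) / ∑ j, A i j * σ j) / ξ)
    (M' : Ω → ℝ) (hM' : ∀ ω, M' ω = ⨆ i, Z' ω i) :
    0 < ℙ Astar
    ∧ (∀ ω ∈ Astar, ∀ i, Z' ω i = E ω + ρ ω i)
    ∧ (∀ i, ∀ᵐ ω ∂ℙ, ρ ω i ≤ 0)
    ∧ IndepFun E ρ ℙ
    ∧ (∀ t : ℝ, 0 ≤ t → ℙ[{ω | t < M' ω} | Astar] = ENNReal.ofReal (Real.exp (-t)))
    ∧ IndepFun M' (fun ω => fun i => Z' ω i - M' ω) (ℙ[|Astar]) := by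
  have : Nonempty (Fin m) := ⟨⟨0, hm⟩⟩
  have hw : ∀ i j, 0 ≤ A i j * σ j := fun i j => mul_nonneg (hA i j) (hσ j).le
  set ρ₀ : (Fin D → ℝ) → Fin m → ℝ := fun s i => gpMean ξ (fun j => A i j * σ j) s
  have hρ₀ : Measurable ρ₀ := measurable_pi_lambda _ fun i => measurable_gpMean _ _
  obtain rfl : ρ = fun ω => ρ₀ (S ω) := funext₂ hρ
  have hW_div : ∀ ω i, W ω i / ∑ j, A i j * σ j = gpScale 1 ξ (E ω + ρ₀ (S ω) i) := fun ω i => by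
    simp only [ρ₀, ← sum_mul_gpScale_add_div (hw i) (hAσ i), hW, hY, gpScale_eq_mul (σ _),
      mul_assoc]
  have hZ'_eq : ∀ ω i, Z' ω i = E ω + ρ₀ (S ω) i := fun ω i => by
    rw [hZ', mul_div_assoc, ← gpScaleInv, hW_div, gpScaleInv_gpScale_one]
  have hW_pos : ∀ ω i, 0 < W ω i ↔ 0 < Z' ω i := fun ω i => by
    rw [← div_pos_iff_of_pos_right (hAσ i), hW_div, gpScale_one_pos_iff, hZ'_eq]
  set r : (Fin D → ℝ) → ℝ := fun s => ⨆ i, ρ₀ s i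
  have hr : Measurable r := Measurable.iSup fun i => (measurable_pi_apply i).comp hρ₀
  have hM'_eq : ∀ ω, M' ω = E ω + r (S ω) := fun ω => by
    simp only [hM', hZ'_eq, r, add_ciSup (Finite.bddAbove_range _)]
  have hAstar_eq : Astar = {ω | 0 < M' ω} := by
    ext ω
    simp only [hAstar, hM', Set.mem_ofPred_eq, lt_ciSup_iff (Finite.bddAbove_range _), hW_pos]
  have hρ_nonpos : ∀ᵐ ω ∂ℙ, ∀ i, ρ₀ (S ω) i ≤ 0 := by
    filter_upwards [ae_all_iff.mpr hSle] with ω hω i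
    exact gpMean_nonpos (hw i) (hAσ i) ξ hω
  obtain ⟨hpos, htail, hindep_cond⟩ := exp_add_nonpos_cond_pos hEmeas hSmeas hr hEexp hindep
    (hρ_nonpos.mono fun ω hω => ciSup_le hω) hM'_eq
  rw [hAstar_eq]
  refine ⟨hpos, fun ω _ i => hZ'_eq ω i, fun i => hρ_nonpos.mono fun ω hω => hω i,
    hindep.comp measurable_id hρ₀, htail, ?_⟩
  have hshape : (fun ω i => Z' ω i - M' ω) = (fun s i => ρ₀ s i - r s) ∘ S := by
    funext ω i
    simp only [hZ'_eq, hM'_eq, Function.comp_apply]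
    ring
  rw [hshape]
  exact hindep_cond.comp measurable_id
    (measurable_pi_lambda _ fun i => ((measurable_pi_apply i).comp hρ₀).sub hr)

/-- Linear transformations of an MGP vector (common shape `ξ`, scales
`σ`) by a nonnegative `m × D` matrix `A` with `(Aσ)ᵢ > 0`. With `Wᵢ = Σⱼ Aᵢⱼ Yⱼ`, the
event `A* = {∃ i, Wᵢ > 0}` has positive probability; on `A*`,
`Z'ᵢ = ξ⁻¹ log (1 + ξ Wᵢ/(Aσ)ᵢ)` (`= Wᵢ/(Aσ)ᵢ` when `ξ = 0`) satisfies `Z'ᵢ = E + ρᵢ`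
with `ρᵢ = ξ⁻¹ log (Σⱼ Aᵢⱼ σⱼ exp (ξ Sⱼ)/(Aσ)ᵢ) ≤ 0` independent of `E`; and
conditionally on `A*`, `M' = maxᵢ Z'ᵢ` is unit-exponential and independent of
`(Z'ᵢ − M')ᵢ`: the conditional law of `A·Y` given `A·Y ≰ 0` is MGP with scale `A·σ`
and common shape `ξ`. -/
theorem stmt_9
    {Ω : Type*} [MeasureSpace Ω] [IsProbabilityMeasure (ℙ : Measure Ω)]
    {D m : ℕ} (hD : 0 < D) (hm : 0 < m)
    (E : Ω → ℝ) (S : Ω → Fin D → ℝ)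
    (hEmeas : Measurable E) (hSmeas : Measurable S)
    (hEexp : ∀ t : ℝ, 0 ≤ t → ℙ {ω | t < E ω} = ENNReal.ofReal (Real.exp (-t)))
    (hindep : IndepFun E S ℙ)
    (hSle : ∀ j, ∀ᵐ ω ∂ℙ, S ω j ≤ 0)
    (hSmax : ∀ᵐ ω ∂ℙ, (⨆ j, S ω j) = 0)
    (σ : Fin D → ℝ) (hσ : ∀ j, 0 < σ j) (ξ : ℝ)
    (Y : Ω → Fin D → ℝ) (hY : ∀ ω j, Y ω j = gpScale (σ j) ξ (E ω + S ω j))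
    (A : Fin m → Fin D → ℝ) (hA : ∀ i j, 0 ≤ A i j)
    (hAσ : ∀ i, 0 < ∑ j, A i j * σ j)
    (W : Ω → Fin m → ℝ) (hW : ∀ ω i, W ω i = ∑ j, A i j * Y ω j)
    (Astar : Set Ω) (hAstar : Astar = {ω | ∃ i, 0 < W ω i})
    (Z' : Ω → Fin m → ℝ)
    (hZ' : ∀ ω i, Z' ω i =
      if ξ = 0 then W ω i / ∑ j, A i j * σ j
      else Real.log (1 + ξ * W ω i / ∑ j, A i j * σ j) / ξ)
    (ρ : Ω → Fin m → ℝ)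
    (hρ : ∀ ω i, ρ ω i =
      if ξ = 0 then (∑ j, A i j * σ j * S ω j) / ∑ j, A i j * σ j
      else Real.log ((∑ j, A i j * σ j * Real.exp (ξ * S ω j)) / ∑ j, A i j * σ j) / ξ)
    (M' : Ω → ℝ) (hM' : ∀ ω, M' ω = ⨆ i, Z' ω i) :
    0 < ℙ Astar
    ∧ (∀ ω ∈ Astar, ∀ i, Z' ω i = E ω + ρ ω i)
    ∧ (∀ i, ∀ᵐ ω ∂ℙ, ρ ω i ≤ 0)
    ∧ IndepFun E ρ ℙ
    ∧ (∀ t : ℝ, 0 ≤ t → ℙ[{ω | t < M' ω} | Astar] = ENNReal.ofReal (Real.exp (-t)))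
    ∧ IndepFun M' (fun ω => fun i => Z' ω i - M' ω) (ℙ[|Astar]) :=
  stmt_9_general hm E S hEmeas hSmeas hEexp hindep hSle σ hσ ξ Y hY A hA hAσ W hW Astar hAstar Z'
    hZ' ρ hρ M' hM'
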